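/- arXiv:1912.12349 — 4 statements merged into one kernel-verified Lean document; each statement's English description precedes it below -/
import Mathlib

section
/- Let K ⊆ ℝ², let L(K) = ⋃ℒ(K) be the union of the dual family of K, and let e be the line {(x,y) : y = a₀·x + b₀} with (a₀,b₀) ∉ K. Then the projection of e ∩ L(K) to the x-axis equals the set {(b − b₀)/(a₀ − a) : (a,b) ∈ K, a ≠ a₀}; consequently e ∩ L(K) is the image of P_{(a₀,b₀)}(K) ∖ {(0,1),(0,−1)} under a locally Lipschitz function (the composition of the map sending a direction to minus the tangent of its angle with the Lipschitz map t ↦ (t, a₀·t + b₀)), and in particular e ∩ L(K) has one-dimensional Hausdorff measure zero whenever P_{(a₀,b₀)}(K) has measure zero. -/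
/-!
A point `(t, a₀t + b₀)` of `e` lies on the dual line of `(a, b)` iff `a₀t + b₀ = at + b`. For
`a = a₀` this forces `b = b₀`, which is excluded, so `t = (b - b₀)/(a₀ - a)`: minus the slope of
the direction from `(a₀, b₀)` to `(a, b)`. Thus `e ∩ L(K)` is the image of the radial projection
under a map that is smooth away from the two vertical directions, and a locally Lipschitz map
sends `μH¹`-null sets to null sets, since it is Lipschitz on each of countably many pieces.
-/

open MeasureTheory Set Metric
open scoped ENNReal Real

noncomputable section

abbrev Plane : Type := EuclideanSpace ℝ (Fin 2)

/-- The point (a, b) of the plane. -/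
def pt (a b : ℝ) : Plane := (WithLp.equiv 2 (Fin 2 → ℝ)).symm ![a, b]

/-- The line `y = a x + b`. -/
def lineAB (a b : ℝ) : Set Plane := {p | p 1 = a * p 0 + b}

/-- The dual family of lines of a set `K ⊆ ℝ²`. -/
def dualLines (K : Set Plane) : Set (Set Plane) := {e | ∃ p ∈ K, e = lineAB (p 0) (p 1)}

/-- The union of the dual family of `K`. -/
def dualUnion (K : Set Plane) : Set Plane := ⋃₀ dualLines K

/-- The radial projection of `A` from the point `v`, a subset of the unit circle `S¹ ⊆ ℝ²`. -/
def radialProj (v : Plane) (A : Set Plane) : Set Plane :=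
  {y | ∃ x ∈ A, x ≠ v ∧ y = ‖x - v‖⁻¹ • (x - v)}

lemma LocallyLipschitzOn.hausdorffMeasure_image_null {X Y : Type*} [EMetricSpace X]
    [EMetricSpace Y] [MeasurableSpace X] [BorelSpace X] [MeasurableSpace Y] [BorelSpace Y]
    [SecondCountableTopology X] {f : X → Y} {s : Set X} {d : ℝ}
    (hf : LocallyLipschitzOn s f) (hd : 0 ≤ d) (hs : μH[d] s = 0) : μH[d] (f '' s) = 0 := by
  choose! K t ht hK using fun x (hx : x ∈ s) => hf hx
  obtain ⟨u, hus, huc, hcover⟩ := TopologicalSpace.countable_cover_nhdsWithin ht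
  have himage : f '' s ⊆ ⋃ x ∈ u, f '' (s ∩ t x) := by
    rintro _ ⟨y, hy, rfl⟩
    obtain ⟨x, hxu, hyx⟩ := mem_iUnion₂.1 (hcover hy)
    exact mem_biUnion hxu ⟨y, ⟨hy, hyx⟩, rfl⟩
  refine measure_mono_null himage ((measure_biUnion_null_iff huc).2 fun x hx => ?_)
  have hle := ((hK x (hus hx)).mono (inter_subset_right (s := s))).hausdorffMeasure_image_le hd
  rwa [measure_mono_null inter_subset_left hs, mul_zero, nonpos_iff_eq_zero] at hle

lemma locallyLipschitzOn_of_contDiffAt {𝕂 E F : Type*} [RCLike 𝕂] [NormedAddCommGroup E]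
    [NormedSpace 𝕂 E] [NormedAddCommGroup F] [NormedSpace 𝕂 F] {f : E → F} {s : Set E}
    (hf : ∀ x ∈ s, ContDiffAt 𝕂 1 f x) : LocallyLipschitzOn s f := fun x hx =>
  let ⟨K, t, ht, hK⟩ := (hf x hx).exists_lipschitzOnWith
  ⟨K, t, nhdsWithin_le_nhds ht, hK⟩

@[simp] lemma pt_apply_zero (a b : ℝ) : pt a b 0 = a := rfl

@[simp] lemma pt_apply_one (a b : ℝ) : pt a b 1 = b := rfl

lemma Plane.ext {p q : Plane} (h0 : p 0 = q 0) (h1 : p 1 = q 1) : p = q :=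
  PiLp.ext fun i => by fin_cases i <;> assumption

lemma eq_pt_zero_one_or_neg_one {u : Plane} (hu : ‖u‖ = 1) (h0 : u 0 = 0) :
    u = pt 0 1 ∨ u = pt 0 (-1) := by
  rw [EuclideanSpace.norm_eq, Fin.sum_univ_two, Real.sqrt_eq_one, h0] at hu
  rcases sq_eq_one_iff.1 (by simpa using hu : u 1 ^ 2 = 1) with h1 | h1
  exacts [.inl (Plane.ext h0 h1), .inr (Plane.ext h0 h1)]

def linePoint (a b t : ℝ) : Plane := pt t (a * t + b)

lemma lineAB_inter_lineAB_of_ne {a b a' b' : ℝ} (h : a ≠ a') :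
    lineAB a b ∩ lineAB a' b' = {linePoint a b ((b' - b) / (a - a'))} := by
  have ha : a - a' ≠ 0 := sub_ne_zero.2 h
  ext q
  simp only [lineAB, linePoint, mem_inter_iff, mem_ofPred_eq, mem_singleton_iff]
  constructor
  · rintro ⟨hq, hq'⟩
    have hq0 : q 0 = (b' - b) / (a - a') := by field_simp; linarith
    exact Plane.ext (by simp [hq0]) (by simp [hq, hq0])
  · rintro rfl
    simp only [pt_apply_zero, pt_apply_one, true_and]
    field_simp
    ring

lemma disjoint_lineAB_lineAB {a b b' : ℝ} (h : b ≠ b') : Disjoint (lineAB a b) (lineAB a b') :=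
  disjoint_left.2 fun q (hq : q 1 = _) (hq' : q 1 = _) => h (by linarith)

lemma lineAB_inter_dualUnion_eq_image {K : Set Plane} {a₀ b₀ : ℝ} (h : pt a₀ b₀ ∉ K) :
    lineAB a₀ b₀ ∩ dualUnion K =
      (fun p => linePoint a₀ b₀ ((p 1 - b₀) / (a₀ - p 0))) '' {p ∈ K | p 0 ≠ a₀} := by
  ext q
  have hmem : q ∈ lineAB a₀ b₀ ∩ dualUnion K ↔ ∃ p ∈ K, q ∈ lineAB a₀ b₀ ∩ lineAB (p 0) (p 1) := by
    simp only [dualUnion, dualLines, mem_inter_iff, mem_sUnion, mem_ofPred_eq]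
    constructor
    · rintro ⟨hq, _, ⟨p, hp, rfl⟩, hq'⟩
      exact ⟨p, hp, hq, hq'⟩
    · rintro ⟨p, hp, hq, hq'⟩
      exact ⟨hq, _, ⟨p, hp, rfl⟩, hq'⟩
  simp only [hmem, mem_image, mem_ofPred_eq, and_assoc]
  refine exists_congr fun p => and_congr_right fun hp => ?_
  by_cases hp0 : p 0 = a₀
  · have hpv : p ≠ pt a₀ b₀ := fun hpv => h (hpv ▸ hp)
    have hp1 : b₀ ≠ p 1 := fun hp1 => hpv (Plane.ext (by simp [hp0]) (by simp [hp1]))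
    simp [hp0, (disjoint_lineAB_lineAB hp1).inter_eq]
  · rw [lineAB_inter_lineAB_of_ne (Ne.symm hp0), mem_singleton_iff, eq_comm]
    simp [hp0]

def dirSlope (u : Plane) : ℝ := u 1 / u 0

lemma dirSlope_inv_norm_smul (w : Plane) : dirSlope (‖w‖⁻¹ • w) = dirSlope w := by
  rcases eq_or_ne w 0 with rfl | hw
  · simp
  · simp [dirSlope, mul_div_mul_left _ _ (inv_ne_zero (norm_ne_zero_iff.2 hw))]

lemma neg_dirSlope_sub_pt (p : Plane) (a b : ℝ) :
    -dirSlope (p - pt a b) = (p 1 - b) / (a - p 0) := by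
  rw [dirSlope, PiLp.sub_apply, PiLp.sub_apply, pt_apply_zero, pt_apply_one, ← div_neg, neg_sub]

lemma inv_norm_smul_apply_eq_zero_iff {ι : Type*} [Fintype ι] (w : EuclideanSpace ℝ ι) (i : ι) :
    (‖w‖⁻¹ • w) i = 0 ↔ w i = 0 := by
  rcases eq_or_ne w 0 with rfl | hw
  · simp
  · simp [hw]

lemma radialProj_sdiff_vertical_eq_image (v : Plane) (K : Set Plane) :
    radialProj v K \ {pt 0 1, pt 0 (-1)} =
      (fun p => ‖p - v‖⁻¹ • (p - v)) '' {p ∈ K | p 0 ≠ v 0} := by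
  have hvert : ∀ u ∈ ({pt 0 1, pt 0 (-1)} : Set Plane), u 0 = 0 := by
    rintro _ (rfl | rfl) <;> rfl
  ext u
  constructor
  · rintro ⟨⟨p, hp, hpv, rfl⟩, hu⟩
    refine ⟨p, ⟨hp, fun hp0 => hu ?_⟩, rfl⟩
    refine eq_pt_zero_one_or_neg_one (norm_smul_inv_norm (sub_ne_zero.2 hpv)) ?_
    simp [hp0]
  · rintro ⟨p, ⟨hp, hp0⟩, rfl⟩
    refine ⟨⟨p, hp, fun hpv => hp0 (hpv ▸ rfl), rfl⟩, fun hu => hp0 ?_⟩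
    have := hvert _ hu
    rwa [inv_norm_smul_apply_eq_zero_iff, PiLp.sub_apply, sub_eq_zero] at this

lemma contDiffAt_dirSlope {n : WithTop ℕ∞} {u : Plane} (hu : u 0 ≠ 0) :
    ContDiffAt ℝ n dirSlope u :=
  (contDiff_piLp_apply 2).contDiffAt.div (contDiff_piLp_apply 2).contDiffAt hu

lemma contDiffAt_linePoint_neg_dirSlope (a b : ℝ) {n : WithTop ℕ∞} {u : Plane} (hu : u 0 ≠ 0) :
    ContDiffAt ℝ n (fun u => linePoint a b (-dirSlope u)) u := by
  rw [contDiffAt_euclidean, Fin.forall_fin_two]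
  have h := (contDiffAt_dirSlope (n := n) hu).neg
  exact ⟨h, (h.const_smul a).add contDiffAt_const⟩

/-- Let `e` be the line `y = a₀x + b₀` with `(a₀,b₀) ∉ K`, and let `L(K)` be the union of the
dual family of `K`. Then the projection of `e ∩ L(K)` to the x-axis is
`{(b−b₀)/(a₀−a) : (a,b) ∈ K, a ≠ a₀}`; consequently `e ∩ L(K)` is the image of
`P_{(a₀,b₀)}(K) ∖ {(0,1),(0,−1)}` under a locally Lipschitz function, and in particular
`e ∩ L(K)` is `μH¹`-null whenever the radial projection `P_{(a₀,b₀)}(K)` is null. -/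
theorem line_intersection_dual (K : Set Plane) (a₀ b₀ : ℝ) (h : pt a₀ b₀ ∉ K) :
    ((fun p : Plane => p 0) '' (lineAB a₀ b₀ ∩ dualUnion K) =
      {r : ℝ | ∃ p ∈ K, p 0 ≠ a₀ ∧ r = (p 1 - b₀) / (a₀ - p 0)}) ∧
    (∃ f : Plane → Plane,
      LocallyLipschitzOn (radialProj (pt a₀ b₀) K \ {pt 0 1, pt 0 (-1)}) f ∧
      lineAB a₀ b₀ ∩ dualUnion K =
        f '' (radialProj (pt a₀ b₀) K \ {pt 0 1, pt 0 (-1)})) ∧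
    (μH[1] (radialProj (pt a₀ b₀) K) = 0 → μH[1] (lineAB a₀ b₀ ∩ dualUnion K) = 0) := by
  set f : Plane → Plane := fun u => linePoint a₀ b₀ (-dirSlope u)
  have hS := radialProj_sdiff_vertical_eq_image (pt a₀ b₀) K
  have himage : lineAB a₀ b₀ ∩ dualUnion K =
      f '' (radialProj (pt a₀ b₀) K \ {pt 0 1, pt 0 (-1)}) := by
    rw [lineAB_inter_dualUnion_eq_image h, hS, image_image]
    simp only [f, dirSlope_inv_norm_smul, neg_dirSlope_sub_pt, pt_apply_zero]
  have hlip : LocallyLipschitzOn (radialProj (pt a₀ b₀) K \ {pt 0 1, pt 0 (-1)}) f := by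
    refine locallyLipschitzOn_of_contDiffAt fun u hu => contDiffAt_linePoint_neg_dirSlope a₀ b₀ ?_
    obtain ⟨p, ⟨-, hp0⟩, rfl⟩ := hS ▸ hu
    rwa [ne_eq, inv_norm_smul_apply_eq_zero_iff, PiLp.sub_apply, sub_eq_zero]
  refine ⟨?_, ⟨f, hlip, himage⟩, fun hnull => ?_⟩
  · rw [lineAB_inter_dualUnion_eq_image h, image_image]
    ext r
    simp only [linePoint, pt_apply_zero, mem_image, mem_ofPred_eq, and_assoc, eq_comm (b := r)]
  · rw [himage]
    exact hlip.hausdorffMeasure_image_null zero_le_one (measure_mono_null sdiff_subset hnull)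

end
end

section
/- For any non-degenerate rectangle [a,b] × [c,d] ⊆ ℝ² (with a < b and c < d) there exists a compact set K ⊆ [a,b] × [c,d] such that the image of K under (x,y) ↦ x is the whole interval [a,b], but for every unit vector u not parallel to (1,0), the orthogonal projection of K onto the line spanned by u has one-dimensional Lebesgue measure zero. -/
/-!
The set is the image of Cantor space `{0, 1}^ℕ` under `ε ↦ (0.ε₀ε₁ε₂…, ∑ εₙ sₙ 2⁻⁽ⁿ⁺¹⁾)`,
rescaled into the rectangle. Its projection onto a line with `u₁ ≠ 0` is, up to a translation,
the set of subsums `∑ εₙ cₙ` with `cₙ = β (sₙ - r) 2⁻⁽ⁿ⁺¹⁾`, `β ≠ 0`. Such a set is covered by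
`2 ^ N` intervals whose length is twice the tail `∑_{n ≥ N} |cₙ|`, so it is null as soon as
`2 ^ N · ∑_{n ≥ N} |cₙ|` gets arbitrarily small. The slopes `sₙ` are constant on the dyadic
blocks `[2 ^ m, 2 ^ (m + 1))` and run through a dense set of values, so for every `r` some block
`[N, 2 N)` has `sₙ ≈ r`: the coefficients there are small, and beyond `2 N` the tail is geometric.
-/

open MeasureTheory Set Metric
open scoped ENNReal Real

noncomputable section

/-- The orthogonal projection of `A` onto the line spanned by `u`, as a subset of `ℝ`. -/
def orthProj (u : Plane) (A : Set Plane) : Set ℝ := (fun x => (inner ℝ x u : ℝ)) '' A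

lemma pt_apply_zero_s4 (x y : ℝ) : pt x y 0 = x := by simp [pt]

lemma pt_apply_one_s4 (x y : ℝ) : pt x y 1 = y := by simp [pt]

lemma inner_pt (x y : ℝ) (u : Plane) : inner ℝ (pt x y) u = x * u 0 + y * u 1 := by
  simp [pt, PiLp.inner_apply, Fin.sum_univ_two]
  ring

lemma eq_smul_pt_one_zero {u : Plane} (hu : u 1 = 0) : u = u 0 • pt 1 0 := by
  ext i
  fin_cases i <;> simp [pt, hu]

lemma Real.range_ofDigits {b : ℕ} (hb : 1 < b) : range (Real.ofDigits (b := b)) = Icc 0 1 :=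
  (range_subset_iff.2 fun ε => mem_Icc.2 ⟨ofDigits_nonneg ε, ofDigits_le_one ε⟩).antisymm
    (by rw [← image_univ]; exact ofDigits_SurjOn hb)

lemma summable_natCast_add_mul_geometric (x : ℝ) {ρ : ℝ} (h0 : 0 ≤ ρ) (h1 : ρ < 1) :
    Summable fun n : ℕ => ((n : ℝ) + x) * ρ ^ n := by
  have hnorm : ‖ρ‖ < 1 := by rwa [Real.norm_of_nonneg h0]
  simp_rw [add_mul]
  exact ((summable_pow_mul_geometric_of_norm_lt_one 1 hnorm).congr fun n => by simp).add
    ((summable_geometric_of_lt_one h0 h1).mul_left x)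

namespace Talagrand

open Filter

def digitSum (c : ℕ → ℝ) (ε : ℕ → Fin 2) : ℝ := ∑' n, (ε n : ℝ) * c n

lemma abs_digit_mul_le (i : Fin 2) (x : ℝ) : |(i : ℝ) * x| ≤ |x| := by
  fin_cases i <;> simp

section DigitSum

variable {c : ℕ → ℝ}

lemma summable_digit_mul (hc : Summable fun n => |c n|) (ε : ℕ → Fin 2) :
    Summable fun n => (ε n : ℝ) * c n :=
  hc.of_norm_bounded fun n => abs_digit_mul_le (ε n) (c n)

lemma continuous_digitSum (hc : Summable fun n => |c n|) : Continuous (digitSum c) :=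
  continuous_tsum (fun n => ((continuous_of_discreteTopology (f := fun i : Fin 2 => (i : ℝ))).comp
    (continuous_apply n)).mul continuous_const) hc fun n ε => abs_digit_mul_le (ε n) (c n)

lemma digitSum_add {c' : ℕ → ℝ} (hc : Summable fun n => |c n|) (hc' : Summable fun n => |c' n|)
    (ε : ℕ → Fin 2) : digitSum (c + c') ε = digitSum c ε + digitSum c' ε := by
  simp only [digitSum, Pi.add_apply, mul_add]
  exact (summable_digit_mul hc ε).tsum_add (summable_digit_mul hc' ε)

lemma digitSum_const_mul (β : ℝ) (ε : ℕ → Fin 2) :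
    digitSum (fun n => β * c n) ε = β * digitSum c ε := by
  simp only [digitSum, ← tsum_mul_left, mul_left_comm]

lemma abs_digitSum_sub_sum_le (hc : Summable fun n => |c n|) (ε : ℕ → Fin 2) (N : ℕ) :
    |digitSum c ε - ∑ n ∈ Finset.range N, (ε n : ℝ) * c n| ≤ ∑' k, |c (k + N)| := by
  have hs : Summable fun k => (ε (k + N) : ℝ) * c (k + N) :=
    (summable_nat_add_iff N).2 (summable_digit_mul hc ε)
  rw [digitSum, ← (summable_digit_mul hc ε).sum_add_tsum_nat_add N, add_sub_cancel_left]
  calc ‖∑' k, (ε (k + N) : ℝ) * c (k + N)‖ ≤ ∑' k, ‖(ε (k + N) : ℝ) * c (k + N)‖ :=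
        norm_tsum_le_tsum_norm hs.norm
    _ ≤ ∑' k, |c (k + N)| :=
        hs.norm.tsum_le_tsum (fun k => abs_digit_mul_le _ _) ((summable_nat_add_iff N).2 hc)

lemma volume_range_digitSum_le (hc : Summable fun n => |c n|) (N : ℕ) :
    volume (range (digitSum c)) ≤ 2 ^ N * ENNReal.ofReal (2 * ∑' k, |c (k + N)|) := by
  have hcover : range (digitSum c) ⊆
      ⋃ σ : Fin N → Fin 2, closedBall (∑ i, (σ i : ℝ) * c i) (∑' k, |c (k + N)|) := by
    rintro _ ⟨ε, rfl⟩
    refine mem_iUnion.2 ⟨fun i => ε i, ?_⟩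
    rw [mem_closedBall, Real.dist_eq, Fin.sum_univ_eq_sum_range (fun n => (ε n : ℝ) * c n)]
    exact abs_digitSum_sub_sum_le hc ε N
  calc volume (range (digitSum c))
      ≤ ∑ σ : Fin N → Fin 2, volume (closedBall (∑ i, (σ i : ℝ) * c i) (∑' k, |c (k + N)|)) :=
        (measure_mono hcover).trans (measure_iUnion_fintype_le _ _)
    _ = 2 ^ N * ENNReal.ofReal (2 * ∑' k, |c (k + N)|) := by
        simp [Real.volume_closedBall]

lemma volume_range_digitSum_eq_zero (hc : Summable fun n => |c n|)
    (htail : ∀ δ > 0, ∃ N : ℕ, 2 ^ N * ∑' k, |c (k + N)| < δ) :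
    volume (range (digitSum c)) = 0 := by
  refine le_antisymm (ENNReal.le_of_forall_pos_le_add fun δ hδ _ => ?_) zero_le
  obtain ⟨N, hN⟩ := htail (δ / 2) (by positivity)
  calc volume (range (digitSum c)) ≤ 2 ^ N * ENNReal.ofReal (2 * ∑' k, |c (k + N)|) :=
        volume_range_digitSum_le hc N
    _ = ENNReal.ofReal (2 ^ N * (2 * ∑' k, |c (k + N)|)) := by
        rw [ENNReal.ofReal_mul (by positivity : (0 : ℝ) ≤ 2 ^ N), ENNReal.ofReal_pow zero_le_two,
          ENNReal.ofReal_ofNat]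
    _ ≤ 0 + δ := by
        rw [zero_add, ← ENNReal.ofReal_coe_nnreal]
        exact ENNReal.ofReal_le_ofReal (by linarith)

end DigitSum

/-- With `m = Nat.pair i k`, the values `i / (k + 1) - k` come within `1 / (k + 1)` of every
`r` with `|r| ≤ k`, and the pairing keeps them of size at most `m`. -/
def slopeSeq (m : ℕ) : ℝ := (m.unpair.1 : ℝ) / (m.unpair.2 + 1) - m.unpair.2

lemma abs_slopeSeq_le (m : ℕ) : |slopeSeq m| ≤ m := by
  set i := m.unpair.1
  set k := m.unpair.2
  have hm : ((i + k : ℕ) : ℝ) ≤ m := by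
    exact_mod_cast (Nat.add_le_pair i k).trans_eq (Nat.pair_unpair m)
  have hdiv : (i : ℝ) / (k + 1) ≤ i := div_le_self (by positivity) (by simp)
  push_cast at hm
  calc |slopeSeq m| ≤ |(i : ℝ) / (k + 1)| + |(k : ℝ)| := abs_sub _ _
    _ = (i : ℝ) / (k + 1) + k := by
        rw [abs_of_nonneg (by positivity), abs_of_nonneg (by positivity)]
    _ ≤ m := by linarith

lemma exists_slopeSeq_near (r : ℝ) (k K : ℕ) :
    ∃ m, K ≤ m ∧ |slopeSeq m - r| ≤ 1 / (k + 1) := by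
  set k' := max (max k K) ⌈|r|⌉₊
  have hrk' : 0 ≤ r + k' := by
    have : |r| ≤ k' := (Nat.le_ceil _).trans (by exact_mod_cast le_max_right _ _)
    linarith [neg_abs_le r]
  have hk' : (0 : ℝ) < k' + 1 := by positivity
  set i := ⌊(r + k') * (k' + 1)⌋₊
  have hi : (i : ℝ) ≤ (r + k') * (k' + 1) := Nat.floor_le (by positivity)
  have hi' : (r + k') * (k' + 1) < i + 1 := Nat.lt_floor_add_one _
  have hkk' : (k : ℝ) ≤ k' := by exact_mod_cast (le_max_left _ _).trans (le_max_left _ _)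
  refine ⟨Nat.pair i k', ((le_max_right _ _).trans (le_max_left _ _)).trans
    (Nat.right_le_pair i k'), ?_⟩
  have hdiff : slopeSeq (Nat.pair i k') - r = (i - (r + k') * (k' + 1)) / (k' + 1) := by
    rw [slopeSeq, Nat.unpair_pair]
    field_simp
    ring
  rw [hdiff, abs_div, abs_of_pos hk']
  gcongr
  rw [abs_le]
  constructor <;> linarith

def slope (n : ℕ) : ℝ := slopeSeq (Nat.log 2 n)

lemma abs_slope_le (n : ℕ) : |slope n| ≤ n :=
  (abs_slopeSeq_le _).trans (by exact_mod_cast Nat.log_le_self 2 n)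

lemma slope_add_two_pow {j m : ℕ} (hj : j < 2 ^ m) : slope (j + 2 ^ m) = slopeSeq m := by
  have hpow : 2 ^ (m + 1) = 2 ^ m * 2 := pow_succ 2 m
  rw [slope, Nat.log_eq_of_pow_le_of_lt_pow (m := m) (by omega) (by omega)]

def slopeCoeff (r : ℝ) (n : ℕ) : ℝ := (slope n - r) * ((2 : ℝ) ^ (n + 1))⁻¹

lemma two_pow_mul_abs_slopeCoeff_le (r : ℝ) {N n : ℕ} (h : 2 * N ≤ n) :
    2 ^ N * |slopeCoeff r n| ≤ ((n : ℝ) + |r|) * (3 / 4) ^ n := by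
  have hslope : |slope n - r| ≤ n + |r| := (abs_sub _ _).trans (by linarith [abs_slope_le n])
  have hpow : (2 : ℝ) ^ N ≤ (3 / 2) ^ n :=
    calc (2 : ℝ) ^ N ≤ (9 / 4) ^ N := pow_le_pow_left₀ (by norm_num) (by norm_num) N
      _ = (3 / 2) ^ (2 * N) := by rw [pow_mul]; norm_num
      _ ≤ (3 / 2) ^ n := pow_le_pow_right₀ (by norm_num) h
  have hweight : (2 : ℝ) ^ N * ((2 : ℝ) ^ (n + 1))⁻¹ ≤ (3 / 4) ^ n :=
    calc (2 : ℝ) ^ N * ((2 : ℝ) ^ (n + 1))⁻¹ ≤ (3 / 2) ^ n * ((2 : ℝ) ^ n)⁻¹ := by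
          gcongr
          · norm_num
          · omega
      _ = (3 / 4) ^ n := by rw [← div_eq_mul_inv, ← div_pow]; norm_num
  rw [slopeCoeff, abs_mul, abs_inv, abs_pow, abs_two]
  calc (2 : ℝ) ^ N * (|slope n - r| * ((2 : ℝ) ^ (n + 1))⁻¹)
      = |slope n - r| * ((2 : ℝ) ^ N * ((2 : ℝ) ^ (n + 1))⁻¹) := by ring
    _ ≤ ((n : ℝ) + |r|) * (3 / 4) ^ n := by gcongr

lemma summable_abs_slopeCoeff (r : ℝ) : Summable fun n => |slopeCoeff r n| :=
  (summable_natCast_add_mul_geometric |r| (ρ := 3 / 4) (by norm_num) (by norm_num)).of_nonneg_of_le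
    (fun _ => abs_nonneg _)
    fun n => by simpa using two_pow_mul_abs_slopeCoeff_le r (N := 0) (Nat.zero_le n)

lemma two_pow_mul_sum_block_le (r : ℝ) (m : ℕ) :
    2 ^ 2 ^ m * ∑ j ∈ Finset.range (2 ^ m), |slopeCoeff r (j + 2 ^ m)| ≤ |slopeSeq m - r| := by
  set N := 2 ^ m
  have hterm : ∀ j ∈ Finset.range N, |slopeCoeff r (j + N)|
      = |slopeSeq m - r| * ((2 ^ N)⁻¹ * ((1 / 2) ^ j / 2)) := by
    intro j hj
    rw [slopeCoeff, slope_add_two_pow (Finset.mem_range.1 hj), abs_mul, abs_inv, abs_pow, abs_two]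
    congr 1
    rw [one_div, inv_pow, pow_succ, pow_add]
    field_simp
  rw [Finset.sum_congr rfl hterm, ← Finset.mul_sum, ← Finset.mul_sum, ← Finset.sum_div]
  have hgeom := sum_geometric_two_le N
  have hN : (0 : ℝ) < 2 ^ N := by positivity
  calc (2 : ℝ) ^ N * (|slopeSeq m - r| * ((2 ^ N)⁻¹ * ((∑ j ∈ Finset.range N, (1 / 2) ^ j) / 2)))
      = |slopeSeq m - r| * ((∑ j ∈ Finset.range N, (1 / 2 : ℝ) ^ j) / 2) := by
        field_simp
    _ ≤ |slopeSeq m - r| := by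
        nlinarith [abs_nonneg (slopeSeq m - r)]

lemma two_pow_mul_tsum_abs_slopeCoeff_le (r : ℝ) (N : ℕ) :
    (2 : ℝ) ^ N * ∑' k, |slopeCoeff r (k + 2 * N)|
      ≤ ∑' k, ((↑(k + 2 * N) : ℝ) + |r|) * (3 / 4) ^ (k + 2 * N) := by
  have hs : Summable fun k => |slopeCoeff r (k + 2 * N)| :=
    (summable_nat_add_iff (f := fun n => |slopeCoeff r n|) (2 * N)).2 (summable_abs_slopeCoeff r)
  have hmaj : Summable fun k => ((↑(k + 2 * N) : ℝ) + |r|) * (3 / 4) ^ (k + 2 * N) :=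
    (summable_nat_add_iff (f := fun n : ℕ => ((n : ℝ) + |r|) * (3 / 4) ^ n) (2 * N)).2
      (summable_natCast_add_mul_geometric |r| (by norm_num) (by norm_num))
  rw [← tsum_mul_left]
  exact (hs.mul_left _).tsum_le_tsum (fun k => two_pow_mul_abs_slopeCoeff_le r (by omega)) hmaj

lemma exists_two_pow_mul_tsum_abs_slopeCoeff_lt (r : ℝ) {δ : ℝ} (hδ : 0 < δ) :
    ∃ N : ℕ, 2 ^ N * ∑' k, |slopeCoeff r (k + N)| < δ := by
  obtain ⟨K, hK⟩ := eventually_atTop.1 ((tendsto_sum_nat_add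
    fun n : ℕ => ((n : ℝ) + |r|) * (3 / 4) ^ n).eventually (gt_mem_nhds (half_pos hδ)))
  obtain ⟨k, hk⟩ := exists_nat_one_div_lt (half_pos hδ)
  obtain ⟨m, hm, hnear⟩ := exists_slopeSeq_near r k K
  refine ⟨2 ^ m, ?_⟩
  set N := 2 ^ m
  have hs : Summable fun k => |slopeCoeff r (k + N)| :=
    (summable_nat_add_iff (f := fun n => |slopeCoeff r n|) N).2 (summable_abs_slopeCoeff r)
  have hfar := two_pow_mul_tsum_abs_slopeCoeff_le r N
  simp only [two_mul, ← add_assoc] at hfar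
  calc (2 : ℝ) ^ N * ∑' k, |slopeCoeff r (k + N)|
      = 2 ^ N * ∑ j ∈ Finset.range N, |slopeCoeff r (j + N)|
        + 2 ^ N * ∑' k, |slopeCoeff r (k + N + N)| := by
        rw [← mul_add, hs.sum_add_tsum_nat_add N]
    _ < δ / 2 + δ / 2 := by
        refine add_lt_add_of_le_of_lt ((two_pow_mul_sum_block_le r m).trans (hnear.trans hk.le))
          (hfar.trans_lt ?_)
        simpa only [add_assoc] using hK (N + N) (by have := Nat.lt_two_pow_self (n := m); omega)
    _ = δ := add_halves δ

lemma volume_range_digitSum_mul_slopeCoeff (β r : ℝ) :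
    volume (range (digitSum fun n => β * slopeCoeff r n)) = 0 := by
  have hs : Summable fun n => |β * slopeCoeff r n| := by
    simpa only [abs_mul] using (summable_abs_slopeCoeff r).mul_left (|β|)
  refine volume_range_digitSum_eq_zero hs fun δ hδ => ?_
  obtain ⟨N, hN⟩ :=
    exists_two_pow_mul_tsum_abs_slopeCoeff_lt r (δ := δ / (|β| + 1)) (by positivity)
  refine ⟨N, ?_⟩
  have htail : 0 ≤ ∑' k, |slopeCoeff r (k + N)| := tsum_nonneg fun _ => abs_nonneg _
  rw [lt_div_iff₀ (by positivity)] at hN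
  simp only [abs_mul, tsum_mul_left]
  nlinarith [abs_nonneg β]

def height : (ℕ → Fin 2) → ℝ := digitSum (slopeCoeff 0)

lemma abs_height_le (ε : ℕ → Fin 2) : |height ε| ≤ 1 := by
  have hhalf : ‖(1 / 2 : ℝ)‖ < 1 := by norm_num
  have heq : ∀ n : ℕ, (n : ℝ) * ((2 : ℝ) ^ (n + 1))⁻¹ = (n : ℝ) * (1 / 2) ^ n / 2 := by
    intro n
    rw [pow_succ, one_div, inv_pow]
    field_simp
  have hmaj : Summable fun n : ℕ => (n : ℝ) * ((2 : ℝ) ^ (n + 1))⁻¹ := by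
    simpa only [heq, pow_one] using
      (summable_pow_mul_geometric_of_norm_lt_one 1 hhalf).div_const 2
  calc |height ε| ≤ ∑' n, |slopeCoeff 0 n| := by
        simpa [height] using abs_digitSum_sub_sum_le (summable_abs_slopeCoeff 0) ε 0
    _ ≤ ∑' n : ℕ, (n : ℝ) * ((2 : ℝ) ^ (n + 1))⁻¹ :=
        (summable_abs_slopeCoeff 0).tsum_le_tsum (fun n => by
          rw [slopeCoeff, sub_zero, abs_mul, abs_inv, abs_pow, abs_two]
          gcongr
          exact abs_slope_le n) hmaj
    _ = 1 := by
        rw [tsum_congr heq, tsum_div_const, tsum_coe_mul_geometric_of_norm_lt_one hhalf]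
        norm_num

lemma ofDigits_eq_digitSum (ε : ℕ → Fin 2) :
    Real.ofDigits ε = digitSum (fun n => ((2 : ℝ) ^ (n + 1))⁻¹) ε := by
  simp [Real.ofDigits, Real.ofDigitsTerm, digitSum]

lemma mul_ofDigits_add_mul_height (α : ℝ) {β : ℝ} (hβ : β ≠ 0) (ε : ℕ → Fin 2) :
    α * Real.ofDigits ε + β * height ε = digitSum (fun n => β * slopeCoeff (-(α / β)) n) ε := by
  have hw : Summable fun n : ℕ => |α * ((2 : ℝ) ^ (n + 1))⁻¹| := by
    refine (summable_geometric_two.mul_left (|α| / 2)).congr fun n => ?_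
    rw [abs_mul, abs_inv, abs_pow, abs_two, pow_succ, one_div, inv_pow]
    ring
  have hs : Summable fun n => |β * slopeCoeff 0 n| := by
    simpa only [abs_mul] using (summable_abs_slopeCoeff 0).mul_left (|β|)
  rw [ofDigits_eq_digitSum, height, ← digitSum_const_mul, ← digitSum_const_mul,
    ← digitSum_add hw hs]
  congr 1
  funext n
  simp only [Pi.add_apply, slopeCoeff]
  field_simp
  ring

lemma volume_range_mul_ofDigits_add_mul_height (C α : ℝ) {β : ℝ} (hβ : β ≠ 0) :
    volume (range fun ε => C + (α * Real.ofDigits ε + β * height ε)) = 0 := by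
  simp_rw [mul_ofDigits_add_mul_height α hβ]
  rw [show (fun ε => C + digitSum (fun n => β * slopeCoeff (-(α / β)) n) ε)
      = (C + ·) ∘ digitSum (fun n => β * slopeCoeff (-(α / β)) n) from rfl,
    range_comp, image_add_left, measure_preimage_add]
  exact volume_range_digitSum_mul_slopeCoeff β _

def talagrandMap (a b c d : ℝ) (ε : ℕ → Fin 2) : Plane :=
  pt (a + (b - a) * Real.ofDigits ε) (c + (d - c) * (height ε + 1) / 2)

lemma continuous_talagrandMap (a b c d : ℝ) : Continuous (talagrandMap a b c d) :=
  (PiLp.continuous_toLp 2 _).comp (by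
    have := continuous_digitSum (summable_abs_slopeCoeff 0)
    have := Real.continuous_ofDigits (b := 2)
    unfold height
    fun_prop)

lemma talagrandMap_mem {a b c d : ℝ} (hab : a ≤ b) (hcd : c ≤ d) (ε : ℕ → Fin 2) :
    talagrandMap a b c d ε 0 ∈ Icc a b ∧ talagrandMap a b c d ε 1 ∈ Icc c d := by
  have hx := Real.ofDigits_nonneg ε
  have hx' := Real.ofDigits_le_one ε
  have hy := abs_le.1 (abs_height_le ε)
  rw [talagrandMap, pt_apply_zero_s4, pt_apply_one_s4]
  refine ⟨⟨?_, ?_⟩, ⟨?_, ?_⟩⟩ <;> nlinarith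

lemma image_apply_zero_range_talagrandMap {a b : ℝ} (hab : a < b) (c d : ℝ) :
    (fun p : Plane => p 0) '' range (talagrandMap a b c d) = Icc a b := by
  calc (fun p : Plane => p 0) '' range (talagrandMap a b c d)
      = ((b - a) * · + a) '' range (Real.ofDigits (b := 2)) := by
        rw [← range_comp, ← range_comp]
        congr 1
        funext ε
        simp only [Function.comp, talagrandMap, pt_apply_zero_s4]
        ring
    _ = Icc a b := by
        rw [Real.range_ofDigits one_lt_two, image_affine_Icc' (sub_pos.2 hab)]
        simp

lemma volume_orthProj_range_talagrandMap (a b : ℝ) {c d : ℝ} (hcd : c ≠ d) {u : Plane}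
    (hu : u 1 ≠ 0) : volume (orthProj u (range (talagrandMap a b c d))) = 0 := by
  have hβ : (d - c) / 2 * u 1 ≠ 0 :=
    mul_ne_zero (div_ne_zero (sub_ne_zero.2 hcd.symm) two_ne_zero) hu
  convert volume_range_mul_ofDigits_add_mul_height (a * u 0 + (c + (d - c) / 2) * u 1)
    ((b - a) * u 0) hβ using 2
  rw [orthProj, ← range_comp]
  congr 1
  funext ε
  simp only [Function.comp, talagrandMap, inner_pt]
  ring

end Talagrand

open Talagrand

/-- (Talagrand) Any non-degenerate rectangle `[a,b] × [c,d]` contains a compact set whose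
projection to the x-axis is all of `[a,b]`, but whose orthogonal projection in every other
direction has Lebesgue measure zero. -/
theorem exists_compact_full_vertical_other_projections_null
    (a b c d : ℝ) (hab : a < b) (hcd : c < d) :
    ∃ K : Set Plane, IsCompact K ∧
      K ⊆ {p : Plane | p 0 ∈ Icc a b ∧ p 1 ∈ Icc c d} ∧
      (fun p : Plane => p 0) '' K = Icc a b ∧
      ∀ u : Plane, ‖u‖ = 1 → (¬ ∃ t : ℝ, u = t • pt 1 0) →
        volume (orthProj u K) = 0 := by
  refine ⟨range (talagrandMap a b c d), isCompact_range (continuous_talagrandMap a b c d), ?_,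
    image_apply_zero_range_talagrandMap hab c d, fun u _ hu => ?_⟩
  · rintro _ ⟨ε, rfl⟩
    exact talagrandMap_mem hab.le hcd.le ε
  · exact volume_orthProj_range_talagrandMap a b hcd.ne fun h => hu ⟨u 0, eq_smul_pt_one_zero h⟩
end
end

section
/- Let A ⊆ ℝ² be compact. Then the function f_A : [0,π] → ℝ defined by f_A(φ) = λ(pr_φ(A)), where pr_φ(A) is the orthogonal projection of A onto the line spanned by the unit vector (cos φ, sin φ), is upper semicontinuous. -/
open MeasureTheory Set Metric
open scoped ENNReal Real

noncomputable section

/-! Turning the direction from `u` to `v` moves each projected point of `A ⊆ closedBall 0 R` by at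
most `R * ‖v - u‖`, so for `φ` near `φ₀` the projection lies in a thin closed thickening of the
compact projection at `φ₀`, and the measure of those thickenings tends to the measure of the
projection itself. -/

open Filter Topology

theorem UpperSemicontinuousAt.ennreal_toReal {X : Type*} [TopologicalSpace X] {f : X → ℝ≥0∞}
    {x₀ : X} (hf : UpperSemicontinuousAt f x₀) (hx₀ : f x₀ ≠ ∞) :
    UpperSemicontinuousAt (fun x => (f x).toReal) x₀ := by
  intro y hy
  have hlt : f x₀ < ENNReal.ofReal y := by
    rwa [← ENNReal.ofReal_toReal hx₀, ENNReal.ofReal_lt_ofReal_iff_of_nonneg ENNReal.toReal_nonneg]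
  filter_upwards [hf _ hlt] with x hx using ENNReal.toReal_lt_of_lt_ofReal hx

theorem upperSemicontinuousAt_measure_of_eventually_subset_cthickening
    {X α : Type*} [TopologicalSpace X] [MetricSpace α] [ProperSpace α] [MeasurableSpace α]
    [OpensMeasurableSpace α] {μ : Measure α} [IsFiniteMeasureOnCompacts μ] {S : X → Set α}
    {x₀ : X} (hS₀ : IsCompact (S x₀))
    (hS : ∀ δ > 0, ∀ᶠ x in 𝓝 x₀, S x ⊆ cthickening δ (S x₀)) :
    UpperSemicontinuousAt (fun x => μ (S x)) x₀ := by
  intro y hy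
  have hsmall : ∀ᶠ δ in 𝓝[>] (0 : ℝ), μ (cthickening δ (S x₀)) < y :=
    ((tendsto_measure_cthickening_of_isCompact hS₀).eventually (gt_mem_nhds hy)).filter_mono
      nhdsWithin_le_nhds
  obtain ⟨δ, hδy, hδ⟩ := (hsmall.and self_mem_nhdsWithin).exists
  filter_upwards [hS δ hδ] with x hx using (measure_mono hx).trans_lt hδy

section InnerProductSpace

variable {E : Type*} [NormedAddCommGroup E] [InnerProductSpace ℝ E]

theorem image_inner_subset_cthickening {A : Set E} {R : ℝ} (hA : A ⊆ closedBall 0 R) (u v : E) :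
    (fun x => inner ℝ x v) '' A ⊆ cthickening (R * dist v u) ((fun x => inner ℝ x u) '' A) := by
  rintro _ ⟨x, hx, rfl⟩
  refine mem_cthickening_of_dist_le _ _ _ _ (mem_image_of_mem _ hx) ?_
  calc dist (inner ℝ x v) (inner ℝ x u) = |inner ℝ x (v - u)| := by
        rw [Real.dist_eq, inner_sub_right]
    _ ≤ ‖x‖ * ‖v - u‖ := abs_real_inner_le_norm _ _
    _ ≤ R * dist v u := by
        rw [dist_eq_norm]
        gcongr
        simpa using hA hx

theorem eventually_image_inner_subset_cthickening {X : Type*} [TopologicalSpace X] {A : Set E}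
    (hA : Bornology.IsBounded A) {u : X → E} {x₀ : X} (hu : ContinuousAt u x₀) {δ : ℝ}
    (hδ : 0 < δ) :
    ∀ᶠ x in 𝓝 x₀,
      (fun a => inner ℝ a (u x)) '' A ⊆ cthickening δ ((fun a => inner ℝ a (u x₀)) '' A) := by
  obtain ⟨R, hR⟩ := hA.subset_closedBall 0
  have hlim : Tendsto (fun x => R * dist (u x) (u x₀)) (𝓝 x₀) (𝓝 0) := by
    simpa using tendsto_const_nhds.mul (tendsto_iff_dist_tendsto_zero.mp hu)
  filter_upwards [hlim.eventually (gt_mem_nhds hδ)] with x hx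
  exact (image_inner_subset_cthickening hR _ _).trans (cthickening_mono hx.le _)

end InnerProductSpace

theorem continuous_pt_cos_sin : Continuous fun φ : ℝ => pt (Real.cos φ) (Real.sin φ) := by
  apply (PiLp.continuous_toLp (p := 2) (β := fun _ : Fin 2 => ℝ)).comp
  refine continuous_pi fun i => ?_
  fin_cases i <;> simp <;> fun_prop

/-- For a compact `A ⊆ ℝ²`, the function `φ ↦ λ(pr_φ(A))`, giving the Lebesgue measure of the
orthogonal projection of `A` onto the line spanned by `(cos φ, sin φ)`, is upper semicontinuous
on `[0, π]`. -/
theorem measure_projection_upperSemicontinuous (A : Set Plane) (hA : IsCompact A) :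
    UpperSemicontinuousOn
      (fun φ : ℝ => (volume (orthProj (pt (Real.cos φ) (Real.sin φ)) A)).toReal)
      (Icc 0 π) := by
  refine UpperSemicontinuous.upperSemicontinuousOn (fun φ₀ => ?_) _
  have hproj : ∀ u : Plane, IsCompact (orthProj u A) := fun u =>
    hA.image (continuous_id.inner continuous_const)
  refine UpperSemicontinuousAt.ennreal_toReal ?_ (hproj _).measure_lt_top.ne
  exact upperSemicontinuousAt_measure_of_eventually_subset_cthickening (hproj _) fun δ hδ =>
    eventually_image_inner_subset_cthickening hA.isBounded continuous_pt_cos_sin.continuousAt hδ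
end
end

section
/- Let A ⊆ ℝ² be compact. Then the function F_A : ℝ² ∖ A → ℝ defined by F_A(v) = λ(P_v(A)) is upper semicontinuous on ℝ² ∖ A. -/
/-! If `v ∉ A` and `0 < r ≤ dist(v, A)`, moving the base point from `v` to `w`
turns each direction `(x - v)/‖x - v‖`, `x ∈ A`, by at most `2‖w - v‖/r`. Hence `P_w(A)` lies in
the closed `2‖w - v‖/r`-thickening of the compact set `P_v(A)`. Everything happens on the unit
circle, which has finite length, so the measures of these thickenings tend to `λ(P_v(A))` as
`w → v`. -/

open MeasureTheory Set Metric
open scoped ENNReal Real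

noncomputable section

open Filter Topology

theorem upperSemicontinuousAt_of_eventuallyLE_of_tendsto {α γ : Type*} [TopologicalSpace α]
    [LinearOrder γ] [TopologicalSpace γ] [OrderTopology γ] {f g : α → γ} {x : α}
    (hfg : f ≤ᶠ[𝓝 x] g) (hg : Tendsto g (𝓝 x) (𝓝 (f x))) : UpperSemicontinuousAt f x :=
  fun _ hy => (hfg.and (hg.eventually (gt_mem_nhds hy))).mono fun _ h => h.1.trans_lt h.2

namespace NormedSpace

variable {V : Type*} [NormedAddCommGroup V] [NormedSpace ℝ V]

theorem norm_normalize_le (x : V) : ‖normalize x‖ ≤ 1 := by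
  rcases eq_or_ne x 0 with rfl | hx
  · simp [normalize_zero_eq_zero]
  · exact (norm_normalize hx).le

theorem norm_mul_dist_normalize_le (a b : V) :
    ‖a‖ * dist (normalize a) (normalize b) ≤ 2 * dist a b := by
  have key : ‖a‖ • (normalize a - normalize b) = (a - b) + (‖b‖ - ‖a‖) • normalize b := by
    rw [smul_sub, norm_smul_normalize, sub_smul, norm_smul_normalize]; abel
  calc ‖a‖ * dist (normalize a) (normalize b)
      = ‖(a - b) + (‖b‖ - ‖a‖) • normalize b‖ := by
        rw [← key, norm_smul, norm_norm, dist_eq_norm]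
    _ ≤ ‖a - b‖ + |‖b‖ - ‖a‖| * 1 := by
        grw [norm_add_le, norm_smul, Real.norm_eq_abs, norm_normalize_le]
    _ ≤ 2 * dist a b := by
        rw [mul_one, abs_sub_comm, dist_eq_norm]; linarith [abs_norm_sub_norm_le a b]

end NormedSpace

theorem Complex.hausdorffMeasure_one_sphere_ne_top (c : ℂ) (R : ℝ) : μH[1] (sphere c R) ≠ ∞ := by
  rcases lt_or_ge R 0 with hR | hR
  · simp [sphere_eq_empty_of_neg hR]
  have h := (lipschitzWith_circleMap c R).hausdorffMeasure_image_le zero_le_one (Ioc 0 (2 * π))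
  rw [image_circleMap_Ioc, abs_of_nonneg hR, hausdorffMeasure_real, Real.volume_Ioc] at h
  exact ne_top_of_le_ne_top (ENNReal.mul_ne_top (by simp) ENNReal.ofReal_ne_top) h

theorem EuclideanSpace.hausdorffMeasure_one_sphere_ne_top (x : Plane) (R : ℝ) :
    μH[1] (sphere x R) ≠ ∞ := by
  let e : ℂ ≃ₗᵢ[ℝ] Plane := Complex.isometryOfOrthonormal (EuclideanSpace.basisFun (Fin 2) ℝ)
  have : sphere x R = e '' sphere (e.symm x) R := by simp [e.image_sphere]
  rw [this, e.isometry.hausdorffMeasure_image (Or.inl zero_le_one)]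
  exact Complex.hausdorffMeasure_one_sphere_ne_top _ R

theorem radialProj_eq_image (v : Plane) (A : Set Plane) :
    radialProj v A = (fun x => NormedSpace.normalize (x - v)) '' (A \ {v}) := by
  ext y
  simp [radialProj, NormedSpace.normalize, and_assoc, @eq_comm _ y]

theorem radialProj_subset_sphere (v : Plane) (A : Set Plane) :
    radialProj v A ⊆ sphere 0 1 := by
  rw [radialProj_eq_image]
  rintro _ ⟨x, hx, rfl⟩
  simpa using NormedSpace.norm_normalize (sub_ne_zero.2 hx.2)

theorem isCompact_radialProj {v : Plane} {A : Set Plane} (hA : IsCompact A) (hv : v ∉ A) :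
    IsCompact (radialProj v A) := by
  rw [radialProj_eq_image, sdiff_singleton_eq_self hv]
  refine hA.image_of_continuousOn fun x hx => ?_
  have : x - v ≠ 0 := sub_ne_zero.2 fun h => hv (h ▸ hx)
  unfold NormedSpace.normalize
  fun_prop (disch := simpa)

theorem radialProj_subset_cthickening {A : Set Plane} {v w : Plane} {r : ℝ} (hr : 0 < r)
    (hA : ∀ x ∈ A, r ≤ dist x v) :
    radialProj w A ⊆ cthickening (2 * dist w v / r) (radialProj v A) := by
  rw [radialProj_eq_image w]
  rintro _ ⟨x, hx, rfl⟩
  have hxv : x ≠ v := fun h => (hA x hx.1).not_gt (by simpa [h] using hr)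
  refine mem_cthickening_of_dist_le _ (NormedSpace.normalize (x - v)) _ _
    (by rw [radialProj_eq_image]; exact ⟨x, ⟨hx.1, hxv⟩, rfl⟩) ?_
  rw [le_div_iff₀ hr, mul_comm]
  calc r * dist (NormedSpace.normalize (x - w)) (NormedSpace.normalize (x - v))
      ≤ ‖x - v‖ * dist (NormedSpace.normalize (x - v)) (NormedSpace.normalize (x - w)) := by
        rw [dist_comm, ← dist_eq_norm]; gcongr; exact hA x hx.1
    _ ≤ 2 * dist w v := by
        simpa only [dist_sub_left, dist_comm v] using
          NormedSpace.norm_mul_dist_normalize_le (x - v) (x - w)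

/-- For a compact `A ⊆ ℝ²`, the function `v ↦ λ(P_v(A))`, giving the (arc-length, i.e.
1-dimensional Hausdorff) measure of the radial projection of `A` from `v`, is upper
semicontinuous on `ℝ² ∖ A`. -/
theorem measure_radialProj_upperSemicontinuous (A : Set Plane) (hA : IsCompact A) :
    UpperSemicontinuousOn (fun v : Plane => (μH[1] (radialProj v A)).toReal) Aᶜ := by
  intro v hv
  obtain ⟨r, hr, hball⟩ := Metric.mem_nhds_iff.1 (hA.isClosed.isOpen_compl.mem_nhds hv)
  have hrA : ∀ x ∈ A, r ≤ dist x v := fun x hx => not_lt.1 fun h => hball h hx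
  set ν := μH[1].restrict (sphere (0 : Plane) 1)
  have : IsFiniteMeasure ν := isFiniteMeasure_restrict.2
    (EuclideanSpace.hausdorffMeasure_one_sphere_ne_top 0 1)
  have hν : ∀ w, μH[1] (radialProj w A) = ν (radialProj w A) := fun w =>
    (Measure.restrict_eq_self _ (radialProj_subset_sphere w A)).symm
  simp only [hν]
  refine UpperSemicontinuousAt.upperSemicontinuousWithinAt _ <|
    upperSemicontinuousAt_of_eventuallyLE_of_tendsto
      (g := fun w => (ν (cthickening (2 * dist w v / r) (radialProj v A))).toReal)
      (Eventually.of_forall fun w => ENNReal.toReal_mono (measure_ne_top _ _)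
        (measure_mono (radialProj_subset_cthickening hr hrA))) ?_
  have hε : Tendsto (fun w => 2 * dist w v / r) (𝓝 v) (𝓝 0) := by
    simpa using ((continuous_const.mul (continuous_id.dist continuous_const)).div_const r).tendsto v
      (f := fun w : Plane => 2 * dist w v / r)
  exact (ENNReal.tendsto_toReal (measure_ne_top _ _)).comp
    ((tendsto_measure_cthickening_of_isClosed ⟨1, one_pos, measure_ne_top _ _⟩
      (isCompact_radialProj hA hv).isClosed).comp hε)
end
end
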